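/- arXiv:0901.0020 — 3 statements merged into one kernel-verified Lean document; each statement's English description precedes it below -/
import Mathlib

section
/- Fix an integer n ≥ 1, a field 𝔽 and elements t, s ∈ 𝔽 with t ≠ s. Let R(t,s) be the trigonometric R-matrix and, for n×n matrices A, B over 𝔽, let C := (A⊗B)·R(t,s) − R(t,s)·(A⊗B). Then for all indices 1 ≤ p < p̄ ≤ n and 1 ≤ q < q̄ ≤ n, the ((p,p̄),(q,q̄)) entry of C equals 2·(t·B_{p q̄}·A_{p̄ q} − s·A_{p q̄}·B_{p̄ q})/(t − s). (With A = A(t) and B = A(s), this is the Sklyanin bracket formula {a_{pq}(t), a_{p̄ q̄}(s)} = 2(t a_{p q̄}(s) a_{p̄ q}(t) − s a_{p q̄}(t) a_{p̄ q}(s))/(t−s).) -/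
/-!
For `q < q̄` the column `(q, q̄)` of `R(t,s)` is `2s/(s−t)` times the basis vector at `(q̄, q)`,
and for `p < p̄` the row `(p, p̄)` is `2t/(s−t)` times the basis vector at `(p̄, p)`: both read
off from the entry formula `R_{(a,b),(c,d)} = [a = d, b = c]·(…)`, which holds because every
summand of `R` is a Kronecker product of matrix units. Hence the entry of `(A⊗B)R − R(A⊗B)`
at `((p,p̄),(q,q̄))` is `(2s/(s−t))·A_{pq̄}B_{p̄q} − (2t/(s−t))·A_{p̄q}B_{pq̄}`.
-/

open Matrix Kronecker

def matrixUnit {𝔽 : Type*} [Field 𝔽] (n : ℕ) (i j : Fin n) : Matrix (Fin n) (Fin n) 𝔽 :=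
  Matrix.single i j 1

/-- The trigonometric R-matrix
`R(t,s) = ((t+s)/(s−t))·Σ_k E_{kk}⊗E_{kk}
        + (2/(s−t))·Σ_{l<m} (t·E_{lm}⊗E_{ml} + s·E_{ml}⊗E_{lm})`,
acting on the tensor square indexed by pairs `(i,j) ∈ {1,…,n}²` with the
Kronecker convention `(X⊗Y)_{(i,j),(k,l)} = X_{ik}·Y_{jl}`. -/
def trigR {𝔽 : Type*} [Field 𝔽] (n : ℕ) (t s : 𝔽) :
    Matrix (Fin n × Fin n) (Fin n × Fin n) 𝔽 :=
  ((t + s) / (s - t)) •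
      ∑ k : Fin n, (matrixUnit n k k) ⊗ₖ (matrixUnit n k k)
    + (2 / (s - t)) •
      ∑ l : Fin n, ∑ m : Fin n,
        if l < m then
          t • ((matrixUnit n l m) ⊗ₖ (matrixUnit n m l))
            + s • ((matrixUnit n m l) ⊗ₖ (matrixUnit n l m))
        else 0

def sklyaninC {𝔽 : Type*} [Field 𝔽] (n : ℕ) (A B : Matrix (Fin n) (Fin n) 𝔽)
    (t s : 𝔽) : Matrix (Fin n × Fin n) (Fin n × Fin n) 𝔽 :=
  (A ⊗ₖ B) * trigR n t s - trigR n t s * (A ⊗ₖ B)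

section

variable {𝔽 : Type*} [Field 𝔽] {n : ℕ}

theorem matrixUnit_kronecker_matrixUnit_apply (i j k l a b c d : Fin n) :
    (matrixUnit n i j ⊗ₖ matrixUnit n k l : Matrix (Fin n × Fin n) (Fin n × Fin n) 𝔽)
      (a, b) (c, d) = if i = a ∧ k = b ∧ j = c ∧ l = d then 1 else 0 := by
  simp only [matrixUnit, single_kronecker_single, single_apply, Prod.mk.injEq, mul_one, and_assoc]

theorem sum_matrixUnit_kronecker_diag_apply (a b c d : Fin n) :
    (∑ k, matrixUnit n k k ⊗ₖ matrixUnit n k k : Matrix (Fin n × Fin n) (Fin n × Fin n) 𝔽)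
      (a, b) (c, d) = if a = b ∧ a = c ∧ a = d then 1 else 0 := by
  simp only [Matrix.sum_apply, matrixUnit_kronecker_matrixUnit_apply, ite_and,
    Finset.sum_ite_eq', Finset.mem_univ, if_true]

theorem sum_matrixUnit_kronecker_offDiag_apply (t s : 𝔽)
    (a b c d : Fin n) :
    (∑ l : Fin n, ∑ m : Fin n,
        if l < m then
          t • (matrixUnit n l m ⊗ₖ matrixUnit n m l) + s • (matrixUnit n m l ⊗ₖ matrixUnit n l m)
        else 0 : Matrix (Fin n × Fin n) (Fin n × Fin n) 𝔽) (a, b) (c, d) =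
      if a = d ∧ b = c then (if a < b then t else if b < a then s else 0) else 0 := by
  have summand_apply (l m : Fin n) :
      (if l < m then
          t • (matrixUnit n l m ⊗ₖ matrixUnit n m l) + s • (matrixUnit n m l ⊗ₖ matrixUnit n l m)
        else 0 : Matrix (Fin n × Fin n) (Fin n × Fin n) 𝔽) (a, b) (c, d) =
        (if l = a then if m = b then (if a = d ∧ b = c ∧ a < b then t else 0) else 0 else 0) +
        (if m = a then if l = b then (if a = d ∧ b = c ∧ b < a then s else 0) else 0 else 0) := by
    simp only [apply_ite (fun M : Matrix (Fin n × Fin n) (Fin n × Fin n) 𝔽 => M (a, b) (c, d)),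
      Matrix.add_apply, Matrix.smul_apply, matrixUnit_kronecker_matrixUnit_apply,
      Matrix.zero_apply, smul_eq_mul]
    split_ifs <;> first | (exfalso; omega) | simp_all
  simp only [Matrix.sum_apply, summand_apply, Finset.sum_add_distrib, Finset.sum_ite_irrel,
    Finset.sum_ite_eq', Finset.mem_univ, if_true, Finset.sum_const_zero]
  split_ifs <;> first | (exfalso; omega) | simp_all

theorem trigR_apply (t s : 𝔽) (a b c d : Fin n) :
    trigR n t s (a, b) (c, d) =
      if a = d ∧ b = c then
        if a = b then (t + s) / (s - t) else if a < b then 2 * t / (s - t) else 2 * s / (s - t)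
      else 0 := by
  rw [trigR, Matrix.add_apply, Matrix.smul_apply, Matrix.smul_apply,
    sum_matrixUnit_kronecker_diag_apply, sum_matrixUnit_kronecker_offDiag_apply]
  by_cases hx : a = d ∧ b = c
  · obtain ⟨rfl, rfl⟩ := hx
    rcases lt_trichotomy a b with h | rfl | h
    · simp only [h, h.ne, and_true, and_self, ↓reduceIte, smul_eq_mul, mul_zero, zero_add]
      ring
    · simp only [and_self, ↓reduceIte, smul_eq_mul, mul_one, lt_self_iff_false, mul_zero,
        add_zero]
    · simp only [h, h.ne', h.not_gt, and_true, and_self, ↓reduceIte, smul_eq_mul, mul_zero,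
        zero_add]
      ring
  · have hdiag : ¬(a = b ∧ a = c ∧ a = d) := by
      rintro ⟨rfl, rfl, rfl⟩
      exact hx ⟨rfl, rfl⟩
    simp only [hx, hdiag, ↓reduceIte, smul_eq_mul, mul_zero, add_zero]

theorem trigR_apply_col_of_lt (t s : 𝔽) {q qb : Fin n} (hq : q < qb)
    (x : Fin n × Fin n) :
    trigR n t s x (q, qb) = if x = (qb, q) then 2 * s / (s - t) else 0 := by
  obtain ⟨a, b⟩ := x
  by_cases hx : a = qb ∧ b = q
  · obtain ⟨rfl, rfl⟩ := hx
    simp [trigR_apply, hq.ne', hq.not_gt]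
  · simp [trigR_apply, hx]

theorem trigR_apply_row_of_lt (t s : 𝔽) {p pb : Fin n} (hp : p < pb)
    (y : Fin n × Fin n) :
    trigR n t s (p, pb) y = if y = (pb, p) then 2 * t / (s - t) else 0 := by
  obtain ⟨c, d⟩ := y
  by_cases hy : c = pb ∧ d = p
  · obtain ⟨rfl, rfl⟩ := hy
    simp [trigR_apply, hp, hp.ne]
  · simp only [trigR_apply, Prod.mk.injEq, hy, if_false]
    exact if_neg fun h => hy ⟨h.2.symm, h.1.symm⟩

end

theorem sklyanin_entry_pq_lt_general {n : ℕ} {𝔽 : Type*} [Field 𝔽]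
    (t s : 𝔽) (A B : Matrix (Fin n) (Fin n) 𝔽)
    (p pb q qb : Fin n) (hp : p < pb) (hq : q < qb) :
    sklyaninC n A B t s (p, pb) (q, qb)
      = 2 * (t * B p qb * A pb q - s * A p qb * B pb q) / (t - s) := by
  simp only [sklyaninC, Matrix.sub_apply, Matrix.mul_apply, trigR_apply_col_of_lt t s hq,
    trigR_apply_row_of_lt t s hp, mul_ite, ite_mul, mul_zero, zero_mul, Finset.sum_ite_eq',
    Finset.mem_univ, if_true, Matrix.kroneckerMap_apply]
  rw [← neg_sub t s, div_neg, div_neg]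
  ring

/-- Entry `((p,p̄),(q,q̄))`, `p < p̄`, `q < q̄`, of the Sklyanin bracket:
`{a_{pq}(t), a_{p̄q̄}(s)} = 2(t a_{pq̄}(s) a_{p̄q}(t) − s a_{pq̄}(t) a_{p̄q}(s))/(t−s)`. -/
theorem sklyanin_entry_pq_lt {n : ℕ} (hn : 1 ≤ n) {𝔽 : Type*} [Field 𝔽]
    (t s : 𝔽) (hts : t ≠ s) (A B : Matrix (Fin n) (Fin n) 𝔽)
    (p pb q qb : Fin n) (hp : p < pb) (hq : q < qb) :
    sklyaninC n A B t s (p, pb) (q, qb)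
      = 2 * (t * B p qb * A pb q - s * A p qb * B pb q) / (t - s) :=
  sklyanin_entry_pq_lt_general t s A B p pb q qb hp hq
end

section
/- Fix an integer n ≥ 1, a field 𝔽 and elements t, s ∈ 𝔽 with t ≠ s. Let R(t,s) be the trigonometric R-matrix and, for n×n matrices A, B over 𝔽, let C := (A⊗B)·R(t,s) − R(t,s)·(A⊗B). Then for all indices 1 ≤ p < p̄ ≤ n and 1 ≤ q ≤ n, the ((p,p̄),(q,q)) entry of C equals (2t·B_{p q}·A_{p̄ q} − (t+s)·A_{p q}·B_{p̄ q})/(t − s). (With A = A(t) and B = A(s), this is the Sklyanin bracket formula {a_{pq}(t), a_{p̄ q}(s)} = (2t a_{pq}(s) a_{p̄ q}(t) − (t+s) a_{pq}(t) a_{p̄ q}(s))/(t−s).) -/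
open Matrix Kronecker

/-! The trigonometric R-matrix only has entries `R_{(i,j),(j,i)}`, so it is a weighted flip
of the tensor square. Multiplying by a weighted flip on either side just swaps the indices of a
row or a column, hence each entry of the commutator `(A⊗B)·R − R·(A⊗B)` is a difference of
two products of entries of `A` and `B`, weighted by the corresponding entries of `R`. -/

def weightedSwap {ι R : Type*} [DecidableEq ι] [Zero R] (c : ι → ι → R) :
    Matrix (ι × ι) (ι × ι) R :=
  Matrix.of fun x y => if y = x.swap then c x.1 x.2 else 0

section WeightedSwap

variable {ι R : Type*} [Fintype ι] [DecidableEq ι]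

theorem mul_weightedSwap_apply [NonUnitalNonAssocSemiring R] (M : Matrix (ι × ι) (ι × ι) R)
    (c : ι → ι → R) (x y : ι × ι) :
    (M * weightedSwap c) x y = M x y.swap * c y.2 y.1 := by
  rw [mul_apply, Finset.sum_eq_single y.swap]
  · simp [weightedSwap]
  · intro z _ hz
    simp only [weightedSwap, of_apply]
    rw [if_neg (by rintro rfl; exact hz rfl), mul_zero]
  · simp

theorem weightedSwap_mul_apply [NonUnitalNonAssocSemiring R] (M : Matrix (ι × ι) (ι × ι) R)
    (c : ι → ι → R) (x y : ι × ι) :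
    (weightedSwap c * M) x y = c x.1 x.2 * M x.swap y := by
  rw [mul_apply, Finset.sum_eq_single x.swap]
  · simp [weightedSwap]
  · intro z _ hz
    simp [weightedSwap, hz]
  · simp

theorem kronecker_mul_weightedSwap_sub_apply [CommRing R] (A B : Matrix ι ι R)
    (c : ι → ι → R) (i j k l : ι) :
    ((A ⊗ₖ B) * weightedSwap c - weightedSwap c * (A ⊗ₖ B)) (i, j) (k, l)
      = c l k * A i l * B j k - c i j * A j k * B i l := by
  rw [Matrix.sub_apply, mul_weightedSwap_apply, weightedSwap_mul_apply]
  simp only [Prod.swap_prod_mk, kroneckerMap_apply]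
  ring

end WeightedSwap

def trigWeight {ι 𝔽 : Type*} [LinearOrder ι] [Field 𝔽] (t s : 𝔽) (i j : ι) : 𝔽 :=
  if i = j then (t + s) / (s - t) else if i < j then 2 * t / (s - t) else 2 * s / (s - t)

theorem trigR_eq_weightedSwap {𝔽 : Type*} [Field 𝔽] (n : ℕ) (t s : 𝔽) :
    trigR n t s = weightedSwap (trigWeight t s) := by
  ext ⟨i, j⟩ ⟨k, l⟩
  simp only [trigR, matrixUnit, single_kronecker_single, Matrix.add_apply, Matrix.smul_apply,
    Matrix.sum_apply, weightedSwap, trigWeight, of_apply,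
    apply_ite (fun M : Matrix (Fin n × Fin n) (Fin n × Fin n) 𝔽 => M (i, j) (k, l)),
    single_apply, Matrix.zero_apply, smul_eq_mul, mul_ite, mul_one, mul_zero, ite_add_zero,
    Finset.sum_add_distrib, Prod.mk.injEq, ite_and, Prod.swap_prod_mk, Finset.sum_ite_eq',
    Finset.mem_univ, if_true]
  rw [Finset.sum_eq_single i (fun x _ hx => by simp [hx]) (by simp),
    Finset.sum_eq_single j (fun y _ hy => by simp [hy]) (by simp),
    Finset.sum_eq_single j (fun x _ hx => by simp [hx]) (by simp),
    Finset.sum_eq_single i (fun y _ hy => by simp [hy]) (by simp)]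
  by_cases hswap : k = j ∧ l = i
  · obtain ⟨rfl, rfl⟩ := hswap
    rcases lt_trichotomy l k with h | rfl | h
    · simp [h, h.ne, h.not_gt]
      ring
    · simp
    · simp [h, h.ne', h.not_gt]
      ring
  · grind

theorem sklyanin_entry_same_column_general {n : ℕ} {𝔽 : Type*} [Field 𝔽]
    (t s : 𝔽) (hts : t ≠ s) (A B : Matrix (Fin n) (Fin n) 𝔽)
    (p pb q : Fin n) (hp : p < pb) :
    sklyaninC n A B t s (p, pb) (q, q)
      = (2 * t * B p q * A pb q - (t + s) * A p q * B pb q) / (t - s) := by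
  rw [sklyaninC, trigR_eq_weightedSwap, kronecker_mul_weightedSwap_sub_apply]
  simp only [trigWeight, if_true, hp.ne, hp, if_false]
  field_simp [sub_ne_zero.mpr hts, sub_ne_zero.mpr hts.symm]
  ring

/-- Entry `((p,p̄),(q,q))`, `p < p̄`, of the Sklyanin bracket:
`{a_{pq}(t), a_{p̄q}(s)} = (2t a_{pq}(s) a_{p̄q}(t) − (t+s) a_{pq}(t) a_{p̄q}(s))/(t−s)`. -/
theorem sklyanin_entry_same_column {n : ℕ} (hn : 1 ≤ n) {𝔽 : Type*} [Field 𝔽]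
    (t s : 𝔽) (hts : t ≠ s) (A B : Matrix (Fin n) (Fin n) 𝔽)
    (p pb q : Fin n) (hp : p < pb) :
    sklyaninC n A B t s (p, pb) (q, q)
      = (2 * t * B p q * A pb q - (t + s) * A p q * B pb q) / (t - s) :=
  sklyanin_entry_same_column_general t s hts A B p pb q hp
end

section
/- Fix an integer n ≥ 1, a field 𝔽 and elements t, s ∈ 𝔽 with t ≠ s. Let R(t,s) be the trigonometric R-matrix and, for n×n matrices A, B over 𝔽, let C := (A⊗B)·R(t,s) − R(t,s)·(A⊗B). Then for all indices 1 ≤ p ≤ n and 1 ≤ q ≤ n, the ((p,p),(q,q)) entry of C vanishes: C_{(p,p),(q,q)} = 0. (With A = A(t) and B = A(s), this says the Sklyanin bracket {a_{pq}(t), a_{pq}(s)} of a matrix entry with itself at different spectral parameters vanishes, matching the vanishing case of the network-induced bracket for separated sources and sinks.) -/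
open Matrix Kronecker

/-! Row and column `(q, q)` of `R(t, s)` are `(t + s)/(s − t)` times the unit vector at `(q, q)`:
the cross terms `E_{lm} ⊗ E_{ml}` with `l ≠ m` never meet a diagonal pair. So at entry
`((p, p), (q, q))` both products `(A ⊗ B) R` and `R (A ⊗ B)` equal
`(t + s)/(s − t) · a_{pq} b_{pq}`. -/

lemma matrixUnit_kronecker_matrixUnit {𝔽 : Type*} [Field 𝔽] {n : ℕ} (i j k l : Fin n) :
    (matrixUnit n i j ⊗ₖ matrixUnit n k l : Matrix (Fin n × Fin n) (Fin n × Fin n) 𝔽) =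
      single (i, k) (j, l) 1 := by
  rw [matrixUnit, matrixUnit, single_kronecker_single, mul_one]

lemma mul_apply_eq_mul_apply_of_row_col_eq_single {ι α : Type*} [Fintype ι] [DecidableEq ι]
    [CommSemiring α] (M R : Matrix ι ι α) {i j : ι} {c : α} (hrow : R i = Pi.single i c)
    (hcol : Rᵀ j = Pi.single j c) :
    (M * R) i j = (R * M) i j := by
  have hcol' (x : ι) : R x j = (Pi.single j c : ι → α) x := congrFun hcol x
  simp only [mul_apply, hrow, hcol', Pi.single_apply, mul_ite, ite_mul, mul_zero, zero_mul,
    Finset.sum_ite_eq', Finset.mem_univ, if_true]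
  exact mul_comm _ _

lemma prod_mk_ne_diag {α : Type*} {i j : α} (h : i ≠ j) (q : α) : (i, j) ≠ (q, q) := by
  rintro ⟨⟩
  exact h rfl

lemma sum_single_diag_apply_diag_left {ι α : Type*} [Fintype ι] [DecidableEq ι]
    [AddCommMonoid α] (c : α) (q : ι) (x : ι × ι) :
    (∑ k : ι, single (k, k) (k, k) c) (q, q) x = if x = (q, q) then c else 0 := by
  rw [Matrix.sum_apply, Finset.sum_eq_single q
    (fun k _ hk => single_apply_of_row_ne (by simpa using hk) _ _ _) (by simp)]
  simp [single_apply, eq_comm]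

lemma sum_single_diag_apply_diag_right {ι α : Type*} [Fintype ι] [DecidableEq ι]
    [AddCommMonoid α] (c : α) (q : ι) (x : ι × ι) :
    (∑ k : ι, single (k, k) (k, k) c) x (q, q) = if x = (q, q) then c else 0 := by
  rw [Matrix.sum_apply, Finset.sum_eq_single q
    (fun k _ hk => single_apply_of_col_ne _ _ (by simpa using hk) _) (by simp)]
  simp [single_apply, eq_comm]

def trigROffDiagonal {𝔽 : Type*} [Field 𝔽] (n : ℕ) (t s : 𝔽) :
    Matrix (Fin n × Fin n) (Fin n × Fin n) 𝔽 :=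
  ∑ l : Fin n, ∑ m : Fin n,
    if l < m then t • single (l, m) (m, l) 1 + s • single (m, l) (l, m) 1 else 0

section trigR

variable {𝔽 : Type*} [Field 𝔽] {n : ℕ} (t s : 𝔽) (q : Fin n)

lemma trigR_eq :
    trigR n t s = ((t + s) / (s - t)) • ∑ k : Fin n, single (k, k) (k, k) 1
      + (2 / (s - t)) • trigROffDiagonal n t s := by
  simp only [trigR, trigROffDiagonal, matrixUnit_kronecker_matrixUnit]

lemma trigROffDiagonal_apply_diag_left (x : Fin n × Fin n) :
    trigROffDiagonal n t s (q, q) x = 0 := by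
  simp only [trigROffDiagonal, Matrix.sum_apply]
  refine Finset.sum_eq_zero fun l _ => Finset.sum_eq_zero fun m _ => ?_
  split_ifs with hlm
  · rw [Matrix.add_apply, Matrix.smul_apply, Matrix.smul_apply,
      single_apply_of_row_ne (prod_mk_ne_diag hlm.ne q),
      single_apply_of_row_ne (prod_mk_ne_diag hlm.ne' q),
      smul_zero, smul_zero, add_zero]
  · rfl

lemma trigROffDiagonal_apply_diag_right (x : Fin n × Fin n) :
    trigROffDiagonal n t s x (q, q) = 0 := by
  simp only [trigROffDiagonal, Matrix.sum_apply]
  refine Finset.sum_eq_zero fun l _ => Finset.sum_eq_zero fun m _ => ?_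
  split_ifs with hlm
  · rw [Matrix.add_apply, Matrix.smul_apply, Matrix.smul_apply,
      single_apply_of_col_ne _ _ (prod_mk_ne_diag hlm.ne' q),
      single_apply_of_col_ne _ _ (prod_mk_ne_diag hlm.ne q),
      smul_zero, smul_zero, add_zero]
  · rfl

lemma trigR_row_diag : trigR n t s (q, q) = Pi.single (q, q) ((t + s) / (s - t)) := by
  ext x
  rw [trigR_eq, Matrix.add_apply, Matrix.smul_apply, Matrix.smul_apply,
    sum_single_diag_apply_diag_left, trigROffDiagonal_apply_diag_left, Pi.single_apply]
  simp

lemma trigR_col_diag : (trigR n t s)ᵀ (q, q) = Pi.single (q, q) ((t + s) / (s - t)) := by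
  ext x
  rw [transpose_apply, trigR_eq, Matrix.add_apply, Matrix.smul_apply, Matrix.smul_apply,
    sum_single_diag_apply_diag_right, trigROffDiagonal_apply_diag_right, Pi.single_apply]
  simp

end trigR

theorem sklyanin_entry_diagonal_vanishes_general {n : ℕ} {𝔽 : Type*} [Field 𝔽]
    (t s : 𝔽) (A B : Matrix (Fin n) (Fin n) 𝔽)
    (p q : Fin n) :
    sklyaninC n A B t s (p, p) (q, q) = 0 := by
  rw [sklyaninC, Matrix.sub_apply, sub_eq_zero]
  exact mul_apply_eq_mul_apply_of_row_col_eq_single _ _ (trigR_row_diag t s p)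
    (trigR_col_diag t s q)

/-- Entry `((p,p),(q,q))` of the Sklyanin bracket vanishes:
`{a_{pq}(t), a_{pq}(s)} = 0`. -/
theorem sklyanin_entry_diagonal_vanishes {n : ℕ} (hn : 1 ≤ n) {𝔽 : Type*} [Field 𝔽]
    (t s : 𝔽) (hts : t ≠ s) (A B : Matrix (Fin n) (Fin n) 𝔽)
    (p q : Fin n) :
    sklyaninC n A B t s (p, p) (q, q) = 0 :=
  sklyanin_entry_diagonal_vanishes_general t s A B p q
end
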